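/- Kernel dimension of the first differential of the Heisenberg Poisson polynomial complex: for w ≥ 1, consider the ℝ-vector space of triples (α, β, γ) of polynomials in MvPolynomial (Fin 3) ℝ, each homogeneous of degree w, satisfying the three equations pderiv 0 γ = 0, pderiv 1 γ = 0, and γ = X 2 · (pderiv 0 α + pderiv 1 β). This space has ℝ-dimension (w+2)(w+3)/2. -/

import Mathlib

open MvPolynomial

namespace HeisenbergKer

/-- Shorthand for polynomials in three variables. -/
abbrev P := MvPolynomial (Fin 3) ℝ

/-- The `i`-th partial derivative as an `ℝ`-linear map on `MvPolynomial (Fin 3) ℝ`. -/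
noncomputable def D (i : Fin 3) : P →ₗ[ℝ] P := (pderiv i).toLinearMap

/-- Projection onto the first component `α` of a triple `(α, β, γ)`. -/
noncomputable def pα : (P × P × P) →ₗ[ℝ] P := LinearMap.fst ℝ P (P × P)

/-- Projection onto the second component `β` of a triple `(α, β, γ)`. -/
noncomputable def pβ : (P × P × P) →ₗ[ℝ] P :=
  (LinearMap.fst ℝ P P) ∘ₗ (LinearMap.snd ℝ P (P × P))

/-- Projection onto the third component `γ` of a triple `(α, β, γ)`. -/
noncomputable def pγ : (P × P × P) →ₗ[ℝ] P :=
  (LinearMap.snd ℝ P P) ∘ₗ (LinearMap.snd ℝ P (P × P))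

/-- The space of triples `(α, β, γ)` of polynomials, each homogeneous of degree `w`,
satisfying `∂₀ γ = 0`, `∂₁ γ = 0` and `γ = X 2 · (∂₀ α + ∂₁ β)`:
the kernel of the first differential of the weight-`w` Poisson polynomial
cohomology complex of the Heisenberg Lie–Poisson structure on `ℝ³`. -/
noncomputable def kerSpace (w : ℕ) : Submodule ℝ (P × P × P) :=
  ((homogeneousSubmodule (Fin 3) ℝ w).prod
      ((homogeneousSubmodule (Fin 3) ℝ w).prod (homogeneousSubmodule (Fin 3) ℝ w)))
    ⊓ LinearMap.ker (D 0 ∘ₗ pγ)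
    ⊓ LinearMap.ker (D 1 ∘ₗ pγ)
    ⊓ LinearMap.ker
        (pγ - (LinearMap.mulLeft ℝ (X 2 : P)) ∘ₗ (D 0 ∘ₗ pα + D 1 ∘ₗ pβ))

end HeisenbergKer

/-!
Write `z = X 2`. If `(α, β, γ)` lies in the kernel, then `γ` is homogeneous of degree `w` and
free of `x` and `y`, hence a multiple of `z ^ w`; cancelling `z` in `γ = z (∂ₓα + ∂ᵧβ)` shows that
the kernel is the graph over the pairs `(α, β)` whose divergence `∂ₓα + ∂ᵧβ` lies on the line
`ℝ z ^ (w - 1)`. The divergence maps pairs of degree-`w` forms onto forms of degree `w - 1`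
(already `∂ₓ` does, in characteristic zero), so the preimage of a line has dimension
`2 C(w + 2, 2) - C(w + 1, 2) + 1 = C(w + 3, 2)`.
-/

open Module

theorem Submodule.finrank_comap_add_finrank_of_surjective {K V W : Type*} [DivisionRing K]
    [AddCommGroup V] [Module K V] [AddCommGroup W] [Module K W] [FiniteDimensional K V]
    {f : V →ₗ[K] W} (hf : Function.Surjective f) (L : Submodule K W) :
    finrank K (L.comap f) + finrank K W = finrank K V + finrank K L := by
  have hf_rank := f.finrank_range_add_finrank_ker
  have hg_rank := (f.domRestrict (L.comap f)).finrank_range_add_finrank_ker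
  rw [LinearMap.range_eq_top.mpr hf, finrank_top] at hf_rank
  rw [LinearMap.range_domRestrict, map_comap_eq_of_surjective hf, LinearMap.ker_domRestrict,
    (comapSubtypeEquivOfLe (LinearMap.ker_le_comap f)).finrank_eq] at hg_rank
  omega

namespace MvPolynomial

variable {σ K : Type*}

section CommSemiring

variable [CommSemiring K]

noncomputable def pderivHomogeneous (i : σ) (n : ℕ) :
    homogeneousSubmodule σ K (n + 1) →ₗ[K] homogeneousSubmodule σ K n :=
  (pderiv i).toLinearMap.restrict fun _ hp => by simpa using hp.pderiv (i := i)

theorem span_X_pow_le_homogeneousSubmodule (j : σ) (m : ℕ) :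
    K ∙ (X j ^ m : MvPolynomial σ K) ≤ homogeneousSubmodule σ K m :=
  (Submodule.span_singleton_le_iff_mem _ _).mpr (isHomogeneous_X_pow j m)

instance [Finite σ] (n : ℕ) : Module.Finite K (homogeneousSubmodule σ K n) :=
  Module.Finite.iff_fg.mpr (homogeneousSubmodule_fg σ K n)

end CommSemiring

variable [Field K]

theorem finrank_homogeneousSubmodule [Fintype σ] (n : ℕ) :
    finrank K (homogeneousSubmodule σ K n) = (Fintype.card σ + n - 1).choose n := by
  classical
  have hdeg : {d : σ →₀ ℕ | d.degree = n} = ↑((Finset.univ : Finset σ).finsuppAntidiag n) := by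
    ext d
    simp [Finset.mem_finsuppAntidiag, Finsupp.degree_eq_sum]
  rw [homogeneousSubmodule_eq_finsupp_supported, hdeg,
    (AddMonoidAlgebra.supportedEquivFinsupp _).finrank_eq, Module.finrank_finsupp_self]
  simp [Finset.card_finsuppAntidiag_nat_eq_choose]

theorem X_mul_mem_span_X_pow_succ_iff {j : σ} {m : ℕ} {t : MvPolynomial σ K} :
    X j * t ∈ K ∙ (X j ^ (m + 1) : MvPolynomial σ K) ↔ t ∈ K ∙ (X j ^ m : MvPolynomial σ K) := by
  simp only [Submodule.mem_span_singleton, pow_succ', ← mul_smul_comm]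
  exact exists_congr fun c => (mul_right_injective₀ (X_ne_zero j)).eq_iff

variable [CharZero K]

theorem coeff_eq_zero_of_pderiv_eq_zero {i : σ} {p : MvPolynomial σ K} (hp : pderiv i p = 0)
    {d : σ →₀ ℕ} (hd : d i ≠ 0) : coeff d p = 0 := by
  have hcoeff := coeff_pderiv (i := i) p (d - Finsupp.single i 1)
  rw [hp, coeff_zero, tsub_add_cancel_of_le
    (Finsupp.single_le_iff.mpr (Nat.one_le_iff_ne_zero.mpr hd))] at hcoeff
  exact (mul_eq_zero.mp hcoeff.symm).resolve_right (Nat.cast_add_one_ne_zero _)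

theorem eq_smul_X_pow_of_pderiv_eq_zero {j : σ} {m : ℕ} {q : MvPolynomial σ K}
    (hq : q.IsHomogeneous m) (h : ∀ i ≠ j, pderiv i q = 0) :
    q = coeff (Finsupp.single j m) q • X j ^ m := by
  classical
  ext d
  rw [coeff_smul, coeff_X_pow, smul_eq_mul]
  by_cases hd : Finsupp.single j m = d
  · rw [if_pos hd, mul_one, hd]
  rw [if_neg hd, mul_zero]
  by_contra hne
  have hsingle : d = Finsupp.single j (d j) := by
    ext i
    rcases eq_or_ne i j with rfl | hij
    · simp
    · rw [Finsupp.single_eq_of_ne hij]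
      by_contra hi
      exact hne (coeff_eq_zero_of_pderiv_eq_zero (h i hij) hi)
  have hdeg : d.degree = m := by
    by_contra hm
    exact hne (hq.coeff_eq_zero hm)
  rw [hsingle, Finsupp.degree_single] at hdeg
  exact hd (by rw [hsingle, hdeg])

theorem mem_span_X_pow_iff_pderiv_eq_zero {j : σ} {m : ℕ} {q : MvPolynomial σ K}
    (hq : q.IsHomogeneous m) :
    q ∈ K ∙ (X j ^ m : MvPolynomial σ K) ↔ ∀ i ≠ j, pderiv i q = 0 := by
  refine ⟨fun hmem i hij => ?_, fun h => ?_⟩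
  · obtain ⟨c, rfl⟩ := Submodule.mem_span_singleton.mp hmem
    simp [pderiv_X_of_ne hij.symm]
  · rw [eq_smul_X_pow_of_pderiv_eq_zero hq h]
    exact Submodule.smul_mem _ _ (Submodule.mem_span_singleton_self _)

theorem pderivHomogeneous_surjective (i : σ) (n : ℕ) :
    Function.Surjective (pderivHomogeneous (K := K) i n) := by
  suffices hle : homogeneousSubmodule σ K n ≤
      (homogeneousSubmodule σ K (n + 1)).map (pderiv i).toLinearMap by
    rintro ⟨q, hq⟩
    obtain ⟨p, hp, hpq⟩ := hle hq
    exact ⟨⟨p, hp⟩, Subtype.ext hpq⟩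
  rw [homogeneousSubmodule_eq_finsupp_supported σ K n,
    AddMonoidAlgebra.supported_eq_span_single, Submodule.span_le]
  rintro _ ⟨d, hd, rfl⟩
  refine ⟨monomial (d + Finsupp.single i 1) ((d i : K) + 1)⁻¹, ?_, ?_⟩
  · apply isHomogeneous_monomial
    rw [map_add, Finsupp.degree_single, hd]
  · rw [Derivation.coeFn_coe, pderiv_monomial, add_tsub_cancel_right]
    simp [Nat.cast_add_one_ne_zero, single_eq_monomial]

end MvPolynomial

namespace HeisenbergKer

local notation "𝓗" => homogeneousSubmodule (Fin 3) ℝ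

theorem mem_kerSpace {w : ℕ} {α β γ : P} :
    (α, β, γ) ∈ kerSpace w ↔
      (α ∈ 𝓗 w ∧ β ∈ 𝓗 w ∧ γ ∈ 𝓗 w) ∧ pderiv 0 γ = 0 ∧ pderiv 1 γ = 0 ∧
        γ = X 2 * (pderiv 0 α + pderiv 1 β) := by
  simp only [kerSpace, Submodule.mem_inf, LinearMap.mem_ker, LinearMap.coe_comp,
    Function.comp_apply, LinearMap.sub_apply, LinearMap.add_apply, LinearMap.mulLeft_apply,
    sub_eq_zero, D, pα, pβ, pγ, Derivation.coeFn_coe, Submodule.mem_prod, and_assoc,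
    LinearMap.fst_apply, LinearMap.snd_apply]

noncomputable def divergence (k : ℕ) : 𝓗 (k + 1) × 𝓗 (k + 1) →ₗ[ℝ] 𝓗 k :=
  (pderivHomogeneous 0 k).coprod (pderivHomogeneous 1 k)

@[simp]
theorem coe_divergence_apply (k : ℕ) (a b : 𝓗 (k + 1)) :
    (divergence k (a, b) : P) = pderiv 0 (a : P) + pderiv 1 (b : P) :=
  rfl

theorem divergence_surjective (k : ℕ) : Function.Surjective (divergence k) := fun q => by
  obtain ⟨p, rfl⟩ := pderivHomogeneous_surjective 0 k q
  exact ⟨(p, 0), by simp [divergence]⟩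

noncomputable def zPowLine (k : ℕ) : Submodule ℝ (𝓗 k) :=
  (ℝ ∙ (X 2 : P) ^ k).comap (𝓗 k).subtype

theorem finrank_zPowLine (k : ℕ) : finrank ℝ (zPowLine k) = 1 := by
  rw [zPowLine,
    (Submodule.comapSubtypeEquivOfLe (span_X_pow_le_homogeneousSubmodule 2 k)).finrank_eq,
    finrank_span_singleton (pow_ne_zero _ (X_ne_zero 2))]

noncomputable def toTriple (k : ℕ) : 𝓗 (k + 1) × 𝓗 (k + 1) →ₗ[ℝ] P × P × P :=
  ((𝓗 (k + 1)).subtype ∘ₗ LinearMap.fst ℝ _ _).prod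
    (((𝓗 (k + 1)).subtype ∘ₗ LinearMap.snd ℝ _ _).prod
      (LinearMap.mulLeft ℝ (X 2 : P) ∘ₗ (𝓗 k).subtype ∘ₗ divergence k))

@[simp]
theorem toTriple_apply (k : ℕ) (a b : 𝓗 (k + 1)) :
    toTriple k (a, b) = ((a : P), (b : P), X 2 * (pderiv 0 (a : P) + pderiv 1 (b : P))) :=
  rfl

theorem toTriple_injective (k : ℕ) : Function.Injective (toTriple k) := by
  rintro ⟨a, b⟩ ⟨a', b'⟩ h
  simp only [toTriple_apply, Prod.mk.injEq] at h
  exact Prod.ext (Subtype.ext h.1) (Subtype.ext h.2.1)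

theorem kerSpace_succ_eq_map (k : ℕ) :
    kerSpace (k + 1) = ((zPowLine k).comap (divergence k)).map (toTriple k) := by
  ext ⟨α, β, γ⟩
  simp only [mem_kerSpace, Submodule.mem_map, Submodule.mem_comap, zPowLine, Prod.exists,
    toTriple_apply, Prod.mk.injEq, Submodule.subtype_apply, coe_divergence_apply]
  constructor
  · rintro ⟨⟨hα, hβ, hγ⟩, h0, h1, rfl⟩
    refine ⟨⟨α, hα⟩, ⟨β, hβ⟩, ?_, rfl, rfl, rfl⟩
    rw [← X_mul_mem_span_X_pow_succ_iff, mem_span_X_pow_iff_pderiv_eq_zero hγ]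
    intro i hi
    fin_cases i
    exacts [h0, h1, absurd rfl hi]
  · rintro ⟨a, b, hdiv, rfl, rfl, rfl⟩
    have hline := X_mul_mem_span_X_pow_succ_iff.mpr hdiv
    have hhom := span_X_pow_le_homogeneousSubmodule 2 (k + 1) hline
    have hpderiv := (mem_span_X_pow_iff_pderiv_eq_zero hhom).mp hline
    exact ⟨⟨a.2, b.2, hhom⟩, hpderiv 0 (by decide), hpderiv 1 (by decide), rfl⟩

/-- **Kernel dimension of the first differential of the Heisenberg Poisson polynomial
complex.** For `w ≥ 1`, the space of triples `(α, β, γ)` of degree-`w` homogeneous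
polynomials with `∂₀ γ = ∂₁ γ = 0` and `γ = X 2 · (∂₀ α + ∂₁ β)` has dimension
`(w+2)(w+3)/2`. -/
theorem finrank_kerSpace (w : ℕ) (hw : 1 ≤ w) :
    Module.finrank ℝ (kerSpace w) = (w + 2) * (w + 3) / 2 := by
  obtain ⟨k, rfl⟩ : ∃ k, w = k + 1 := ⟨w - 1, by omega⟩
  have hH : ∀ m, finrank ℝ (𝓗 m) = (m + 2) * (m + 1) / 2 := fun m => by
    rw [finrank_homogeneousSubmodule, Fintype.card_fin, show 3 + m - 1 = m + 2 by omega,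
      Nat.choose_symm_add, Nat.choose_two_right]
    rfl
  have hdim := (zPowLine k).finrank_comap_add_finrank_of_surjective (divergence_surjective k)
  rw [finrank_prod, finrank_zPowLine, hH, hH] at hdim
  rw [kerSpace_succ_eq_map,
    ← (Submodule.equivMapOfInjective _ (toTriple_injective k) _).finrank_eq]
  ring_nf at hdim ⊢
  omega

end HeisenbergKer
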